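/- arXiv:2006.05558 — 6 statements merged into one kernel-verified Lean document; each statement's English description precedes it below -/
import Mathlib

section
/- The number of F_{q^2}-rational affine points on the Hermitian curve x^q + x = y^{q+1} is exactly q^3. -/
/-!
Since `|F| = q ^ 2`, `q` is a power of the characteristic, so `σ x = x ^ q` is a field
automorphism, and it is involutive because `x ^ (q ^ 2) = x`. The trace
`T x = x ^ q + x` is additive and lands in the fixed field `{z | z ^ q = z}`; the kernel of `T`
and the fixed field are root sets of polynomials of degree `q`, so both have at most `q` elements,
while `|range T| * |ker T| = q ^ 2`. Hence `T` maps onto the fixed field with fibres of size `q`.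
The norm `y ^ (q + 1) = σ y * y` is fixed by `σ`, so for every `y` there are exactly `q` solutions
`x`, giving `q ^ 2 * q` points.
-/

open Polynomial

theorem Polynomial.ncard_le_natDegree_of_forall_isRoot {R : Type*} [CommRing R] [IsDomain R]
    {p : R[X]} (hp : p ≠ 0) {s : Set R} (hs : ∀ x ∈ s, p.IsRoot x) : s.ncard ≤ p.natDegree := by
  have hsub : s ⊆ p.rootSet R := fun x hx => by
    rw [mem_rootSet, coe_aeval_eq_eval]
    exact ⟨hp, hs x hx⟩
  exact (Set.ncard_le_ncard hsub (p.rootSet_finite R)).trans (p.ncard_rootSet_le R)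

theorem ncard_setOf_pow_eq_mul_le {K : Type*} [Field K] {q : ℕ} (hq : 1 < q) (c : K) :
    {x : K | x ^ q = c * x}.ncard ≤ q := by
  have hdeg : (X ^ q - C c * X : K[X]).natDegree = q := by
    compute_degree!
    all_goals simp [hq.ne', hq.le]
  have hne : (X ^ q - C c * X : K[X]) ≠ 0 := ne_zero_of_natDegree_gt (hdeg ▸ hq)
  refine (ncard_le_natDegree_of_forall_isRoot hne fun x (hx : x ^ q = c * x) => ?_).trans_eq hdeg
  simp [hx]

theorem FiniteField.exists_ringChar_pow_eq_of_dvd_card {F : Type*} [Field F] [Fintype F] {q : ℕ}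
    (hq : q ∣ Fintype.card F) : ∃ i, ringChar F ^ i = q := by
  obtain ⟨n, hp, hcard⟩ := FiniteField.card F (ringChar F)
  obtain ⟨i, -, rfl⟩ := (Nat.dvd_prime_pow hp).1 (hcard ▸ hq)
  exact ⟨i, rfl⟩

namespace Hermitian

variable {F : Type*} [Field F] {q : ℕ}

/-- For an involution `σ`, the trace of `F` over the fixed field of `σ`. -/
def trace (σ : F →+* F) : F →+ F := σ.toAddMonoidHom + AddMonoidHom.id F

theorem trace_apply (σ : F →+* F) (x : F) : trace σ x = σ x + x := rfl

variable {σ : F →+* F}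

theorem apply_trace (hσ : Function.Involutive σ) (x : F) : σ (trace σ x) = trace σ x := by
  rw [trace_apply, map_add, hσ x, add_comm]

theorem apply_mul_self_eq (hσ : Function.Involutive σ) (y : F) : σ (σ y * y) = σ y * y := by
  rw [map_mul, hσ y, mul_comm]

theorem ncard_fixedPoints_le (hpow : ∀ x, σ x = x ^ q) (hq : 1 < q) :
    {x | σ x = x}.ncard ≤ q := by
  simpa only [hpow, one_mul] using ncard_setOf_pow_eq_mul_le hq (1 : F)

theorem ncard_ker_trace_le (hpow : ∀ x, σ x = x ^ q) (hq : 1 < q) :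
    ((trace σ).ker : Set F).ncard ≤ q := by
  convert ncard_setOf_pow_eq_mul_le hq (-1 : F) using 2
  ext x
  simp [trace_apply, hpow, add_eq_zero_iff_eq_neg]

theorem range_trace_subset (hσ : Function.Involutive σ) :
    Set.range (trace σ) ⊆ {x | σ x = x} := by
  rintro _ ⟨x, rfl⟩
  exact apply_trace hσ x

variable [Fintype F]

theorem involutive_of_card_eq_sq (hpow : ∀ x, σ x = x ^ q) (hF : Fintype.card F = q ^ 2) :
    Function.Involutive σ := fun x => by
  rw [hpow, hpow, ← pow_mul, ← sq, ← hF, FiniteField.pow_card]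

theorem ncard_ker_trace_mul_ncard_range :
    ((trace σ).ker : Set F).ncard * (Set.range (trace σ)).ncard = Fintype.card F := by
  rw [← Nat.card_coe_set_eq, ← Nat.card_coe_set_eq, ← AddMonoidHom.coe_range, SetLike.coe_sort_coe,
    SetLike.coe_sort_coe, ← AddSubgroup.index_ker, AddSubgroup.card_mul_index,
    Nat.card_eq_fintype_card]

theorem ncard_ker_trace_eq_and_ncard_range_trace_eq (hpow : ∀ x, σ x = x ^ q) (hq : 1 < q)
    (hF : Fintype.card F = q ^ 2) :
    ((trace σ).ker : Set F).ncard = q ∧ (Set.range (trace σ)).ncard = q := by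
  have hker := ncard_ker_trace_le hpow hq
  have hrange := (Set.ncard_le_ncard (range_trace_subset (involutive_of_card_eq_sq hpow hF))).trans
    (ncard_fixedPoints_le hpow hq)
  have hprod := hF ▸ ncard_ker_trace_mul_ncard_range (σ := σ)
  -- both factors of `q ^ 2` are at most `q`
  constructor <;> nlinarith

theorem range_trace (hpow : ∀ x, σ x = x ^ q) (hq : 1 < q) (hF : Fintype.card F = q ^ 2) :
    Set.range (trace σ) = {x | σ x = x} :=
  Set.eq_of_subset_of_ncard_le (range_trace_subset (involutive_of_card_eq_sq hpow hF))
    ((ncard_fixedPoints_le hpow hq).trans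
      (ncard_ker_trace_eq_and_ncard_range_trace_eq hpow hq hF).2.ge)

theorem card_fiber_trace (hpow : ∀ x, σ x = x ^ q) (hq : 1 < q) (hF : Fintype.card F = q ^ 2)
    {c : F} (hc : σ c = c) : Nat.card {x // trace σ x = c} = q := by
  classical
  have hc' : c ∈ Set.range (trace σ) := (range_trace hpow hq hF).symm ▸ hc
  rw [Nat.card_eq_fintype_card, Fintype.card_subtype,
    AddMonoidHom.card_fiber_eq_of_mem_range _ hc' ⟨0, map_zero _⟩,
    ← (ncard_ker_trace_eq_and_ncard_range_trace_eq hpow hq hF).1, ← Set.ncard_coe_finset]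
  congr 1
  ext x
  simp

theorem card_affinePoints (hpow : ∀ x, σ x = x ^ q) (hq : 1 < q) (hF : Fintype.card F = q ^ 2) :
    Nat.card {p : F × F // p.1 ^ q + p.1 = p.2 ^ (q + 1)} = q ^ 3 := by
  have e : {p : F × F // p.1 ^ q + p.1 = p.2 ^ (q + 1)} ≃ Σ y : F, {x // trace σ x = σ y * y} :=
    { toFun p := ⟨p.1.2, p.1.1, by rw [trace_apply, hpow, hpow, p.2, pow_succ]⟩
      invFun s := ⟨(s.2.1, s.1), by simpa only [trace_apply, hpow, ← pow_succ] using s.2.2⟩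
      left_inv _ := rfl
      right_inv _ := rfl }
  have hinv := involutive_of_card_eq_sq hpow hF
  simp only [Nat.card_congr e, Nat.card_sigma,
    card_fiber_trace hpow hq hF (apply_mul_self_eq hinv _), Finset.sum_const, Finset.card_univ,
    hF, smul_eq_mul]
  ring

end Hermitian

theorem stmt_2_general {q : ℕ} {F : Type*} [Field F] [Fintype F]
    (hF : Fintype.card F = q ^ 2) :
    Nat.card {p : F × F // p.1 ^ q + p.1 = p.2 ^ (q + 1)} = q ^ 3 := by
  obtain ⟨i, hi⟩ := FiniteField.exists_ringChar_pow_eq_of_dvd_card (hF ▸ dvd_pow_self q two_ne_zero)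
  have : Fact (ringChar F).Prime := ⟨CharP.char_is_prime F _⟩
  have hq : 1 < q := by
    have := hF ▸ Fintype.one_lt_card (α := F)
    nlinarith
  refine Hermitian.card_affinePoints (σ := iterateFrobenius F (ringChar F) i) (fun x => ?_) hq hF
  rw [iterateFrobenius_def, hi]

/-- The Hermitian curve `x^q + x = y^(q+1)` has exactly `q^3` affine `F_{q^2}`-rational points. -/
theorem stmt_2 {q : ℕ} (hq : IsPrimePow q) {F : Type*} [Field F] [Fintype F]
    (hF : Fintype.card F = q ^ 2) :
    Nat.card {p : F × F // p.1 ^ q + p.1 = p.2 ^ (q + 1)} = q ^ 3 :=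
  stmt_2_general hF
end

section
/- Let q be a power of 2, and let σ_0, …, σ_q be the (q+1) distinct roots in F_{q^2} of p(t) = t^{q+1} + α^q t^q + α t + γ. Define P_k = Σ_{i=0}^q σ_i^k. Then for all 0 ≤ k < q, P_k = α^{qk}. -/
/-!
By Vieta, the roots of `t^(q+1) + α^q t^q + α t + γ` have `e₁ = α^q` (signs are irrelevant in
characteristic 2) and `e_j = 0` for `2 ≤ j < q`, so Newton's identities collapse to
`P_k = e₁ P_(k-1)` for `0 < k < q`, while `P₀ = q + 1 = 1`.
-/

open Polynomial Finset

section PowerSums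

variable {ι R : Type*} [Fintype ι] [CommRing R]

theorem sum_pow_eq_newton (σ : ι → R) {k : ℕ} (hk : 0 < k) :
    ∑ i, σ i ^ k = (-1) ^ (k + 1) * k * (univ.val.map σ).esymm k -
      ∑ a ∈ antidiagonal k with a.1 ∈ Set.Ioo 0 k,
        (-1) ^ a.1 * (univ.val.map σ).esymm a.1 * ∑ i, σ i ^ a.2 := by
  simpa only [map_sub, map_mul, map_pow, map_neg, map_one, map_natCast, map_sum,
    MvPolynomial.aeval_esymm_eq_multiset_esymm, MvPolynomial.psum, MvPolynomial.aeval_X] using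
    congrArg (MvPolynomial.aeval σ) (MvPolynomial.psum_eq_mul_esymm_sub_sum ι R k hk)

theorem sum_pow_eq_esymm_one_pow (σ : ι → R) {n : ℕ}
    (h : ∀ j, 2 ≤ j → j < n → (univ.val.map σ).esymm j = 0) {k : ℕ} (hk : 0 < k) (hkn : k < n) :
    ∑ i, σ i ^ k = (univ.val.map σ).esymm 1 ^ k := by
  induction k with
  | zero => omega
  | succ k ih =>
    rcases Nat.eq_zero_or_pos k with rfl | hk
    · rw [zero_add, sum_pow_eq_newton σ one_pos,
        sum_eq_zero fun a ha => by simp only [mem_filter, Set.mem_Ioo] at ha; omega]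
      simp
    have hsum : ∑ a ∈ antidiagonal (k + 1) with a.1 ∈ Set.Ioo 0 (k + 1),
        (-1) ^ a.1 * (univ.val.map σ).esymm a.1 * ∑ i, σ i ^ a.2 =
          -((univ.val.map σ).esymm 1 * ∑ i, σ i ^ k) := by
      rw [sum_eq_single_of_mem (1, k) (by simp [mem_filter]; omega)]
      · simp
      · rintro ⟨a, b⟩ hab hne
        simp only [mem_filter, HasAntidiagonal.mem_antidiagonal, Set.mem_Ioo] at hab
        have ha : a ≠ 1 := by rintro rfl; exact hne (by simp; omega)
        rw [h a (by omega) (by omega), mul_zero, zero_mul]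
    rw [sum_pow_eq_newton σ (Nat.succ_pos k), h (k + 1) (by omega) hkn, hsum, ih hk (by omega)]
    ring

end PowerSums

theorem esymm_eq_neg_one_pow_mul_coeff {ι R : Type*} [Fintype ι] [CommRing R] (σ : ι → R)
    {j : ℕ} (hj : j ≤ Fintype.card ι) :
    (univ.val.map σ).esymm j = (-1) ^ j * (∏ i, (X - C (σ i))).coeff (Fintype.card ι - j) := by
  have := (univ.val.map σ).prod_X_sub_C_coeff (k := Fintype.card ι - j) (by simp)
  simp only [Multiset.map_map, Function.comp_def, Multiset.card_map, card_val, card_univ,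
    Nat.sub_sub_self hj] at this
  rw [Finset.prod, this, ← mul_assoc, ← pow_add, Even.neg_one_pow ⟨j, rfl⟩, one_mul]

section Coeff

variable {R : Type*} [Semiring R] (a b c : R) {q : ℕ}

theorem coeff_X_pow_succ_add_eq_zero {n : ℕ} (h1 : 1 < n) (hq : n < q) :
    (X ^ (q + 1) + C a * X ^ q + C b * X + C c).coeff n = 0 := by
  simp only [coeff_add, coeff_X_pow, coeff_C_mul, coeff_X, coeff_C]
  split_ifs <;> first | omega | simp

theorem coeff_X_pow_succ_add_self (hq : 2 ≤ q) :
    (X ^ (q + 1) + C a * X ^ q + C b * X + C c).coeff q = a := by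
  simp only [coeff_add, coeff_X_pow, coeff_C_mul, coeff_X, coeff_C]
  split_ifs <;> first | omega | simp

end Coeff

theorem stmt_7_general {ℓ q : ℕ} (hq : q = 2 ^ ℓ) (hℓ : 1 ≤ ℓ) {F : Type*} [Field F]
    [CharP F 2] (α γ : F) (σ : Fin (q + 1) → F)
    (hp : (X ^ (q + 1) + C (α ^ q) * X ^ q + C α * X + C γ : F[X]) = ∏ i, (X - C (σ i))) :
    ∀ k < q, ∑ i, σ i ^ k = α ^ (q * k) := by
  have hq2 : 2 ≤ q := hq ▸ Nat.le_self_pow (by omega) 2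
  have hesymm : ∀ j, 2 ≤ j → j < q → (univ.val.map σ).esymm j = 0 := fun j hj hjq => by
    rw [esymm_eq_neg_one_pow_mul_coeff σ (by simp; omega), ← hp, Fintype.card_fin,
      coeff_X_pow_succ_add_eq_zero _ _ _ (by omega) (by omega), mul_zero]
  have hesymm_one : (univ.val.map σ).esymm 1 = α ^ q := by
    rw [esymm_eq_neg_one_pow_mul_coeff σ (by simp), ← hp, Fintype.card_fin, Nat.add_sub_cancel,
      coeff_X_pow_succ_add_self _ _ _ hq2, pow_one, neg_one_mul, CharTwo.neg_eq]
  rintro (_ | k) hk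
  · have hq0 : (q : F) = 0 := (CharP.cast_eq_zero_iff F 2 q).2 (hq ▸ dvd_pow_self 2 (by omega))
    simp [hq0]
  · rw [sum_pow_eq_esymm_one_pow σ hesymm k.succ_pos hk, hesymm_one, pow_mul]

/-- If `p(t) = t^(q+1) + α^q t^q + α t + γ` has `q+1` distinct roots `σ_0, …, σ_q` in `F_{q^2}`
(`q` a power of 2), then the power sums satisfy `P_k = α^(qk)` for `0 ≤ k < q`. -/
theorem stmt_7 {ℓ q : ℕ} (hq : q = 2 ^ ℓ) (hℓ : 1 ≤ ℓ) {F : Type*} [Field F] [Fintype F]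
    (hF : Fintype.card F = q ^ 2) [CharP F 2] (α γ : F) (σ : Fin (q + 1) → F)
    (hinj : Function.Injective σ)
    (hp : (X ^ (q + 1) + C (α ^ q) * X ^ q + C α * X + C γ : F[X]) = ∏ i, (X - C (σ i))) :
    ∀ k < q, ∑ i, σ i ^ k = α ^ (q * k) :=
  stmt_7_general hq hℓ α γ σ hp
end

section
/- With the setup above, the power sums satisfy P_{kq} = α^k for all 0 ≤ k < q. -/
/-!
Over a field of characteristic 2, Vieta's formulas carry no signs, so the elementary symmetric
functions of the `σ i` are read off the coefficients of `p`: `e₁ = α^q` and `eⱼ = 0` for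
`2 ≤ j ≤ q - 1`. Newton's identities then collapse to `Pₖ = e₁ Pₖ₋₁`, whence `Pₖ = α^(qk)` for
`k < q`. Finally `x ↦ x^q` is additive, so `P_{kq} = Pₖ^q = α^(kq²) = α^k` because `|F| = q²`.
-/

open Polynomial Finset

theorem sum_pow_eq_sum_pow_of_esymm_eq_zero {R ι : Type*} [CommRing R] [Fintype ι] (σ : ι → R)
    {n : ℕ} (hesymm : ∀ j, 2 ≤ j → j ≤ n → (univ.val.map σ).esymm j = 0) {k : ℕ} (hk : 1 ≤ k)
    (hkn : k ≤ n) : ∑ i, σ i ^ k = (∑ i, σ i) ^ k := by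
  induction k, hk using Nat.le_induction with
  | base => simp
  | succ k hk ih =>
    have newton := congrArg (MvPolynomial.aeval σ)
      (MvPolynomial.psum_eq_mul_esymm_sub_sum ι R (k + 1) (by omega))
    have hsingle : ∑ a ∈ antidiagonal (k + 1) with a.1 ∈ Set.Ioo 0 (k + 1),
        (-1) ^ a.1 * (univ.val.map σ).esymm a.1 * ∑ i, σ i ^ a.2 =
        -(univ.val.map σ).esymm 1 * ∑ i, σ i ^ k := by
      have hmem : ∀ a b, (a, b) ∈ {x ∈ antidiagonal (k + 1) | x.1 ∈ Set.Ioo 0 (k + 1)} ↔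
          a + b = k + 1 ∧ 0 < a ∧ a < k + 1 := by
        simp only [mem_filter, HasAntidiagonal.mem_antidiagonal, Set.mem_Ioo, implies_true]
      rw [sum_eq_single_of_mem (1, k) ((hmem 1 k).2 (by omega))]
      · simp
      · rintro ⟨a, b⟩ hab hne
        rw [hmem] at hab
        have ha : a ≠ 1 := by rintro rfl; exact hne (Prod.ext rfl (by omega))
        rw [hesymm a (by omega) (by omega), mul_zero, zero_mul]
    simp only [map_sub, map_mul, map_sum, map_pow, map_neg, map_one, map_natCast,
      MvPolynomial.aeval_esymm_eq_multiset_esymm, MvPolynomial.psum, MvPolynomial.aeval_X,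
      hesymm (k + 1) (by omega) hkn, mul_zero, zero_sub, hsingle] at newton
    rw [newton, ih (by omega), neg_mul, neg_neg, Finset.esymm_map_val, powersetCard_one]
    simp [pow_succ, mul_comm]

theorem coeff_prod_X_sub_C_of_charTwo {R ι : Type*} [CommRing R] [CharP R 2] [Fintype ι]
    (σ : ι → R) {j : ℕ} (hj : j ≤ Fintype.card ι) :
    (∏ i, (X - C (σ i))).coeff (Fintype.card ι - j) = (univ.val.map σ).esymm j := by
  have hprod : ∏ i, (X - C (σ i)) = ((univ.val.map σ).map fun t => X - C t).prod := by
    rw [Multiset.map_map]; rfl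
  rw [hprod, Multiset.prod_X_sub_C_coeff _ (by simp), Multiset.card_map, card_val,
    Finset.card_univ, Nat.sub_sub_self hj, CharTwo.neg_eq, one_pow, one_mul]

theorem stmt_8_general {ℓ q : ℕ} (hq : q = 2 ^ ℓ) (hℓ : 1 ≤ ℓ) {F : Type*} [Field F] [Fintype F]
    (hF : Fintype.card F = q ^ 2) [CharP F 2] (α γ : F) (σ : Fin (q + 1) → F)
    (hp : (X ^ (q + 1) + C (α ^ q) * X ^ q + C α * X + C γ : F[X]) = ∏ i, (X - C (σ i))) :
    ∀ k < q, ∑ i, σ i ^ (k * q) = α ^ k := by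
  have hq2 : 2 ≤ q := hq ▸ Nat.le_self_pow (by omega) 2
  have hsum : ∑ i, σ i = α ^ q := by
    have h := prod_X_sub_C_coeff_card_pred univ σ (by simp)
    rw [← hp, CharTwo.neg_eq, card_univ, Fintype.card_fin, Nat.add_sub_cancel] at h
    rw [← h]
    simp only [coeff_add, coeff_C_mul, coeff_X_pow, coeff_X, coeff_C]
    simp [show 1 ≠ q by omega, show q ≠ 0 by omega]
  have hesymm : ∀ j, 2 ≤ j → j ≤ q - 1 → (univ.val.map σ).esymm j = 0 := by
    intro j hj2 hjq
    rw [← coeff_prod_X_sub_C_of_charTwo σ (by rw [Fintype.card_fin]; omega), ← hp, Fintype.card_fin]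
    simp only [coeff_add, coeff_C_mul, coeff_X_pow, coeff_X, coeff_C]
    simp [show q + 1 - j ≠ q + 1 by omega, show q + 1 - j ≠ q by omega,
      show q + 1 - j ≠ 0 by omega, show 1 ≠ q + 1 - j by omega]
  have hpow : ∀ k < q, ∑ i, σ i ^ k = α ^ (q * k) := by
    intro k hk
    rcases Nat.eq_zero_or_pos k with rfl | hk0
    · have hqF : (q : F) = 0 := by simp [hq, CharTwo.two_eq_zero, show ℓ ≠ 0 by omega]
      simp [hqF]
    · rw [sum_pow_eq_sum_pow_of_esymm_eq_zero σ hesymm hk0 (by omega), hsum, pow_mul]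
  intro k hk
  calc ∑ i, σ i ^ (k * q) = (∑ i, σ i ^ k) ^ q := by
        simp_rw [hq, sum_pow_char_pow, ← pow_mul]
    _ = (α ^ q ^ 2) ^ k := by
        rw [hpow k hk, ← pow_mul, ← pow_mul]
        ring_nf
    _ = α ^ k := by rw [← hF, FiniteField.pow_card]

/-- With the roots `σ_i` of `p(t) = t^(q+1) + α^q t^q + α t + γ` in `F_{q^2}` (`q` a power of 2),
the power sums satisfy `P_{kq} = α^k` for `0 ≤ k < q`. -/
theorem stmt_8 {ℓ q : ℕ} (hq : q = 2 ^ ℓ) (hℓ : 1 ≤ ℓ) {F : Type*} [Field F] [Fintype F]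
    (hF : Fintype.card F = q ^ 2) [CharP F 2] (α γ : F) (σ : Fin (q + 1) → F)
    (hinj : Function.Injective σ)
    (hp : (X ^ (q + 1) + C (α ^ q) * X ^ q + C α * X + C γ : F[X]) = ∏ i, (X - C (σ i))) :
    ∀ k < q, ∑ i, σ i ^ (k * q) = α ^ k :=
  stmt_8_general hq hℓ hF α γ σ hp
end

section
/- Let q = 2^ℓ with ℓ ≥ 1, and let Γ be the q × q matrix over F_{q^2} whose (z, w) entry (0-indexed, 0 ≤ z, w ≤ q−1) is P_{wq+z}, where P_k = Σ_{i=0}^q σ_i^k for the roots σ_i of p(t) = t^{q+1} + α^q t^q + α t + γ. Then Γ equals the Kronecker product M_{ℓ−1} ⊗ M_{ℓ−2} ⊗ ⋯ ⊗ M_0, where M_i is the 2×2 matrix [[1, α^{2^i}], [α^{q·2^i}, γ^{2^i}]]. -/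
/-!
Put `δ = γ + α^(q+1)`. In characteristic 2 and with `α^(q²) = α`, each `τ = σ + α^q` satisfies
`τ^(q+1) = (σ^q + α)(σ + α^q) = δ`, so the `τ_i` are exactly the `q+1` roots of `X^(q+1) = δ`.
Rotating these roots by a primitive `(q+1)`-th root of unity shows `∑ τ^d = 0` unless `q+1 ∣ d`,
and for `s, t < q` this gives `∑ τ^(s + q t) = [s = t] δ^s`.
Now `σ^(wq+z) = (τ + α^q)^z (τ^q + α)^w`, and by Frobenius both factors split over the binary
digits of `z` and `w` into products of binomials `τ^(2^j) + α^(q 2^j)` and `τ^(q 2^j) + α^(2^j)`.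
Expanding and summing over `τ`, orthogonality keeps only the terms where the same digits are
picked from both products, and the surviving sum factors digit by digit into the entries of the
`M_j`, the digit `(1,1)` contributing `δ^(2^j) + α^((q+1) 2^j) = γ^(2^j)`.
-/

open Finset Polynomial

theorem Nat.div_two_pow_mod_two_eq_zero_iff {n i : ℕ} :
    n / 2 ^ i % 2 = 0 ↔ i ∉ n.bitIndices.toFinset := by
  simp [Nat.testBit_eq_decide_div_mod_eq]

theorem Nat.toFinset_bitIndices_subset_range {n ℓ : ℕ} (h : n < 2 ^ ℓ) :
    n.bitIndices.toFinset ⊆ range ℓ := fun i hi =>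
  mem_range.2 <| (Nat.pow_lt_pow_iff_right (by norm_num)).1 <|
    (Nat.two_pow_le_of_mem_bitIndices (List.mem_toFinset.1 hi)).trans_lt h

theorem Nat.succ_dvd_add_mul_iff {Q s t : ℕ} (hs : s < Q) (ht : t < Q) :
    Q + 1 ∣ s + Q * t ↔ s = t := by
  -- `s + Q * t = (Q + 1) * t + (s - t)` with `|s - t| < Q + 1`
  refine ⟨fun ⟨k, hk⟩ => ?_, fun h => ⟨t, by rw [h]; ring⟩⟩
  rcases lt_trichotomy k t with h | rfl | h
  · nlinarith
  · linarith
  · nlinarith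

theorem add_pow_eq_prod_bitIndices {R : Type*} [CommSemiring R] [ExpChar R 2] (a b : R) (n : ℕ) :
    (a + b) ^ n = ∏ i ∈ n.bitIndices.toFinset, (a ^ 2 ^ i + b ^ 2 ^ i) := by
  conv_lhs => rw [← Finset.sum_toFinset_bitIndices_two_pow n]
  rw [← prod_pow_eq_pow_sum]
  exact prod_congr rfl fun i _ => add_pow_expChar_pow a b 2 i

theorem prod_pow_two_pow_add_eq_sum_powerset {R : Type*} [CommSemiring R] (y : R) (a : ℕ → R)
    (Z : Finset ℕ) :
    ∏ j ∈ Z, (y ^ 2 ^ j + a j) = ∑ S ∈ Z.powerset, y ^ (∑ j ∈ S, 2 ^ j) * ∏ j ∈ Z \ S, a j := by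
  simp_rw [prod_add, prod_pow_eq_pow_sum]

theorem sum_prod_pow_two_pow_add_mul_prod {R : Type*} [CommSemiring R] {S : Finset R} {Q ℓ : ℕ}
    (hQ : 2 ^ ℓ ≤ Q) {δ : R}
    (horth : ∀ s t, s < Q → t < Q → ∑ x ∈ S, x ^ (s + Q * t) = if s = t then δ ^ s else 0)
    {Z W : Finset ℕ} (hZ : Z ⊆ range ℓ) (hW : W ⊆ range ℓ) (a b : ℕ → R) :
    ∑ x ∈ S, (∏ j ∈ Z, (x ^ 2 ^ j + a j)) * ∏ j ∈ W, ((x ^ Q) ^ 2 ^ j + b j)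
      = ∑ T ∈ (Z ∩ W).powerset, (∏ j ∈ Z \ T, a j) * (∏ j ∈ W \ T, b j) * ∏ j ∈ T, δ ^ 2 ^ j := by
  have hlt : ∀ T ∈ powerset (range ℓ), ∑ j ∈ T, 2 ^ j < Q := fun T hT =>
    (Nat.geomSum_lt le_rfl fun k hk => mem_range.1 (mem_powerset.1 hT hk)).trans_le hQ
  simp_rw [prod_pow_two_pow_add_eq_sum_powerset, sum_mul_sum, prod_pow_eq_pow_sum]
  calc _ = ∑ U ∈ Z.powerset, ∑ V ∈ W.powerset, (∏ j ∈ Z \ U, a j) * (∏ j ∈ W \ V, b j) *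
          ∑ x ∈ S, x ^ (∑ j ∈ U, 2 ^ j + Q * ∑ j ∈ V, 2 ^ j) := by
        rw [sum_comm]
        refine sum_congr rfl fun U _ => ?_
        rw [sum_comm]
        refine sum_congr rfl fun V _ => ?_
        rw [mul_sum]
        refine sum_congr rfl fun x _ => ?_
        rw [pow_add, pow_mul]
        ring
    _ = ∑ U ∈ Z.powerset, ∑ V ∈ W.powerset, if U = V then
          (∏ j ∈ Z \ U, a j) * (∏ j ∈ W \ U, b j) * δ ^ ∑ j ∈ U, 2 ^ j else 0 := by
        refine sum_congr rfl fun U hU => sum_congr rfl fun V hV => ?_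
        rw [horth _ _ (hlt U (powerset_mono.2 hZ hU)) (hlt V (powerset_mono.2 hW hV))]
        simp only [(Finset.geomSum_injective le_rfl).eq_iff]
        split_ifs with h
        · subst h; rfl
        · rw [mul_zero]
    _ = _ := by
        simp_rw [sum_ite_eq, ← sum_filter]
        congr 1
        ext T
        simp only [mem_filter, mem_powerset, subset_inter_iff]

theorem sum_powerset_inter_prod_sdiff {ι R : Type*} [DecidableEq ι] [CommSemiring R]
    (Z W : Finset ι) (a b c : ι → R) :
    ∑ T ∈ (Z ∩ W).powerset, (∏ j ∈ Z \ T, a j) * (∏ j ∈ W \ T, b j) * ∏ j ∈ T, c j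
      = (∏ j ∈ Z \ W, a j) * (∏ j ∈ W \ Z, b j) * ∏ j ∈ Z ∩ W, (c j + a j * b j) := by
  have split : ∀ {Y T : Finset ι} (f : ι → R), T ⊆ Z ∩ W → Z ∩ W ⊆ Y →
      ∏ j ∈ Y \ T, f j = (∏ j ∈ Y \ (Z ∩ W), f j) * ∏ j ∈ (Z ∩ W) \ T, f j := fun f hT hY => by
    rw [← sdiff_union_sdiff_cancel hY hT,
      prod_union (sdiff_disjoint.mono_right sdiff_subset)]
  rw [prod_add, mul_sum]
  refine sum_congr rfl fun T hT => ?_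
  rw [split a (mem_powerset.1 hT) inter_subset_left, split b (mem_powerset.1 hT) inter_subset_right,
    sdiff_inter_self_left, sdiff_inter_self_right, prod_mul_distrib]
  ring

theorem prod_ite_notMem_notMem {ι R : Type*} [DecidableEq ι] [CommMonoid R] {U Z W : Finset ι}
    (hZ : Z ⊆ U) (hW : W ⊆ U) (a b c : ι → R) :
    ∏ i ∈ U, (if i ∉ Z then (if i ∉ W then 1 else b i) else (if i ∉ W then a i else c i))
      = (∏ j ∈ Z \ W, a j) * (∏ j ∈ W \ Z, b j) * ∏ j ∈ Z ∩ W, c j := by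
  have factor : ∀ i, (if i ∉ Z then (if i ∉ W then 1 else b i) else (if i ∉ W then a i else c i))
      = (if i ∈ Z \ W then a i else 1) * (if i ∈ W \ Z then b i else 1) *
        (if i ∈ Z ∩ W then c i else 1) := fun i => by
    by_cases hz : i ∈ Z <;> by_cases hw : i ∈ W <;> simp [hz, hw]
  simp_rw [factor, prod_mul_distrib, prod_ite_mem, inter_eq_right.2 (sdiff_subset.trans hZ),
    inter_eq_right.2 (sdiff_subset.trans hW), inter_eq_right.2 (inter_subset_left.trans hZ)]

theorem IsPrimitiveRoot.sum_nthRootsFinset_pow_eq_zero {K : Type*} [CommRing K] [IsDomain K]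
    {ζ : K} {n : ℕ} (hζ : IsPrimitiveRoot ζ n) (a : K) {d : ℕ} (hd : ¬ n ∣ d) :
    ∑ x ∈ nthRootsFinset n a, x ^ d = 0 := by
  classical
  rcases n.eq_zero_or_pos with rfl | hn
  · simp
  set S := nthRootsFinset n a
  have hinj : Function.Injective (ζ * ·) := mul_right_injective₀ (hζ.ne_zero hn.ne')
  have hS : S.image (ζ * ·) = S := by
    refine eq_of_subset_of_card_le (image_subset_iff.2 fun x hx => ?_)
      (card_image_of_injective _ hinj).ge
    simpa using mul_mem_nthRootsFinset ((Polynomial.mem_nthRootsFinset hn 1).2 hζ.pow_eq_one) hx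
  have hrot : ∑ x ∈ S, x ^ d = ζ ^ d * ∑ x ∈ S, x ^ d := by
    conv_lhs => rw [← hS]
    simp_rw [sum_image hinj.injOn, mul_sum, mul_pow]
  have hζd : 1 - ζ ^ d ≠ 0 := sub_ne_zero.2 (Ne.symm (mt (hζ.pow_eq_one_iff_dvd d).1 hd))
  have h : (1 - ζ ^ d) * ∑ x ∈ S, x ^ d = 0 := by linear_combination hrot
  exact (mul_eq_zero.1 h).resolve_left hζd

theorem IsPrimitiveRoot.sum_nthRootsFinset_pow_add_mul_eq_ite {K : Type*} [CommRing K] [IsDomain K]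
    {ζ : K} {Q : ℕ} (hζ : IsPrimitiveRoot ζ (Q + 1)) {δ : K}
    (hcard : (#(nthRootsFinset (Q + 1) δ) : K) = 1) {s t : ℕ} (hs : s < Q) (ht : t < Q) :
    ∑ x ∈ nthRootsFinset (Q + 1) δ, x ^ (s + Q * t) = if s = t then δ ^ s else 0 := by
  split_ifs with h
  · subst h
    calc ∑ x ∈ nthRootsFinset (Q + 1) δ, x ^ (s + Q * s)
        = ∑ x ∈ nthRootsFinset (Q + 1) δ, δ ^ s := sum_congr rfl fun x hx => by
          rw [show s + Q * s = (Q + 1) * s by ring, pow_mul,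
            (Polynomial.mem_nthRootsFinset Q.succ_pos δ).1 hx]
      _ = δ ^ s := by rw [sum_const, nsmul_eq_mul, hcard, one_mul]
  · exact hζ.sum_nthRootsFinset_pow_eq_zero δ (mt (Nat.succ_dvd_add_mul_iff hs ht).1 h)

theorem FiniteField.exists_isPrimitiveRoot_of_dvd {K : Type*} [Field K] [Fintype K] {n : ℕ}
    (hn : n ∣ Fintype.card K - 1) : ∃ ζ : K, IsPrimitiveRoot ζ n := by
  classical
  obtain ⟨g, hg⟩ := IsCyclic.exists_ofOrder_eq_natCard (α := Kˣ)
  have hg' : IsPrimitiveRoot (g : K) (Fintype.card K - 1) := by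
    rw [IsPrimitiveRoot.coe_units_iff, IsPrimitiveRoot.iff_orderOf, hg, Nat.card_eq_fintype_card,
      Fintype.card_units]
  obtain ⟨m, hm⟩ := hn
  exact ⟨_, hg'.pow (Nat.sub_pos_of_lt Fintype.one_lt_card) (hm.trans (mul_comm n m))⟩

theorem FiniteField.sum_nthRootsFinset_pow_add_mul_eq_ite {K : Type*} [Field K] [Fintype K]
    {Q : ℕ} (hK : Fintype.card K = Q ^ 2) {δ : K} (hcard : (#(nthRootsFinset (Q + 1) δ) : K) = 1)
    {s t : ℕ} (hs : s < Q) (ht : t < Q) :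
    ∑ x ∈ nthRootsFinset (Q + 1) δ, x ^ (s + Q * t) = if s = t then δ ^ s else 0 := by
  obtain ⟨ζ, hζ⟩ := exists_isPrimitiveRoot_of_dvd (K := K) (n := Q + 1)
    ⟨Q - 1, by rw [hK]; exact Nat.sq_sub_sq _ 1⟩
  exact hζ.sum_nthRootsFinset_pow_add_mul_eq_ite hcard hs ht

theorem image_eq_nthRootsFinset {K ι : Type*} [CommRing K] [IsDomain K] [Fintype ι]
    [DecidableEq K] {τ : ι → K} (hτ : Function.Injective τ) {n : ℕ} (hcard : Fintype.card ι = n)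
    {δ : K} (hroot : ∀ i, τ i ^ n = δ) : univ.image τ = nthRootsFinset n δ := by
  refine eq_of_subset_of_card_le (image_subset_iff.2 fun i _ => ?_) ?_
  · exact (Polynomial.mem_nthRootsFinset (hcard ▸ Fintype.card_pos_iff.2 ⟨i⟩) δ).2 (hroot i)
  · rw [card_image_of_injective _ hτ, card_univ, hcard, nthRootsFinset_def]
    exact (Multiset.toFinset_card_le _).trans (card_nthRoots n δ)

theorem add_pow_two_pow_pow_succ_eq_of_root {R : Type*} [CommRing R] [CharP R 2] {ℓ : ℕ} {α γ x : R}
    (hα : (α ^ 2 ^ ℓ) ^ 2 ^ ℓ = α)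
    (hx : x ^ (2 ^ ℓ + 1) + α ^ 2 ^ ℓ * x ^ 2 ^ ℓ + α * x + γ = 0) :
    (x + α ^ 2 ^ ℓ) ^ (2 ^ ℓ + 1) = γ + α ^ (2 ^ ℓ + 1) := by
  rw [pow_succ, add_pow_char_pow, hα]
  linear_combination hx - γ * (CharTwo.two_eq_zero (R := R))

theorem image_add_eq_nthRootsFinset {K : Type*} [Field K] [CharP K 2] [DecidableEq K] {ℓ : ℕ}
    {α γ : K} (hα : (α ^ 2 ^ ℓ) ^ 2 ^ ℓ = α) {σ : Fin (2 ^ ℓ + 1) → K}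
    (hinj : Function.Injective σ)
    (hp : (X ^ (2 ^ ℓ + 1) + C (α ^ 2 ^ ℓ) * X ^ 2 ^ ℓ + C α * X + C γ : K[X])
      = ∏ i, (X - C (σ i))) :
    univ.image (σ · + α ^ 2 ^ ℓ) = nthRootsFinset (2 ^ ℓ + 1) (γ + α ^ (2 ^ ℓ + 1)) := by
  refine image_eq_nthRootsFinset ((add_left_injective _).comp hinj) (Fintype.card_fin _)
    fun i => add_pow_two_pow_pow_succ_eq_of_root hα ?_
  have h := congrArg (eval (σ i)) hp
  simp only [eval_add, eval_mul, eval_pow, eval_X, eval_C, eval_prod, eval_sub] at h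
  rw [h, prod_eq_zero (mem_univ i) (sub_self _)]

theorem stmt_11_general {ℓ q : ℕ} (hq : q = 2 ^ ℓ) (hℓ : 1 ≤ ℓ) {F : Type*} [Field F] [Fintype F]
    (hF : Fintype.card F = q ^ 2) [CharP F 2] (α γ : F)
    (σ : Fin (q + 1) → F) (hinj : Function.Injective σ)
    (hp : (X ^ (q + 1) + C (α ^ q) * X ^ q + C α * X + C γ : F[X]) = ∏ i, (X - C (σ i))) :
    ∀ z < q, ∀ w < q,
      ∑ i, σ i ^ (w * q + z)
        = ∏ i ∈ Finset.range ℓ,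
            (if z / 2 ^ i % 2 = 0 then
              (if w / 2 ^ i % 2 = 0 then (1 : F) else α ^ (2 ^ i))
            else
              (if w / 2 ^ i % 2 = 0 then α ^ (q * 2 ^ i) else γ ^ (2 ^ i))) := by
  classical
  subst hq
  intro z hz w hw
  have hα : (α ^ 2 ^ ℓ) ^ 2 ^ ℓ = α := by rw [← pow_mul, ← sq, ← hF, FiniteField.pow_card]
  have hN := image_add_eq_nthRootsFinset hα hinj hp
  have hτ : Function.Injective (σ · + α ^ 2 ^ ℓ) := (add_left_injective _).comp hinj
  have hcard : (#(nthRootsFinset (2 ^ ℓ + 1) (γ + α ^ (2 ^ ℓ + 1))) : F) = 1 := by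
    rw [← hN, card_image_of_injective _ hτ, card_univ, Fintype.card_fin, Nat.cast_succ,
      Nat.cast_pow, Nat.cast_two, CharTwo.two_eq_zero, zero_pow (by omega), zero_add]
  have hZ := Nat.toFinset_bitIndices_subset_range hz
  have hW := Nat.toFinset_bitIndices_subset_range hw
  calc ∑ i, σ i ^ (w * 2 ^ ℓ + z)
      = ∑ x ∈ nthRootsFinset (2 ^ ℓ + 1) (γ + α ^ (2 ^ ℓ + 1)),
          (∏ j ∈ z.bitIndices.toFinset, (x ^ 2 ^ j + (α ^ 2 ^ ℓ) ^ 2 ^ j)) *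
            ∏ j ∈ w.bitIndices.toFinset, ((x ^ 2 ^ ℓ) ^ 2 ^ j + α ^ 2 ^ j) := by
        rw [← hN, sum_image hτ.injOn]
        refine sum_congr rfl fun i _ => ?_
        have hfrob : (σ i + α ^ 2 ^ ℓ + α ^ 2 ^ ℓ) ^ 2 ^ ℓ = (σ i + α ^ 2 ^ ℓ) ^ 2 ^ ℓ + α := by
          rw [add_pow_char_pow, hα]
        rw [← add_pow_eq_prod_bitIndices, ← add_pow_eq_prod_bitIndices, ← hfrob,
          CharTwo.add_cancel_right, pow_add, mul_comm w, pow_mul, mul_comm]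
    _ = _ := sum_prod_pow_two_pow_add_mul_prod le_rfl
          (fun _ _ => FiniteField.sum_nthRootsFinset_pow_add_mul_eq_ite hF hcard) hZ hW _ _
    _ = _ := sum_powerset_inter_prod_sdiff _ _ _ _ _
    _ = _ := by
        simp only [Nat.div_two_pow_mod_two_eq_zero_iff]
        rw [prod_ite_notMem_notMem hZ hW]
        simp_rw [pow_mul]
        refine congrArg _ (prod_congr rfl fun j _ => ?_)
        rw [add_pow_char_pow, ← mul_pow, ← pow_succ, CharTwo.add_cancel_right]

/-- The `q × q` matrix of power sums `P_{wq+z}` of the roots of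
`p(t) = t^(q+1) + α^q t^q + α t + γ` equals the iterated Kronecker product
`M_{ℓ-1} ⊗ ⋯ ⊗ M_0` where `M_i = [[1, α^(2^i)], [α^(q·2^i), γ^(2^i)]]`; entrywise, the
`(z,w)` entry of this Kronecker product is the product over `i < ℓ` of the entry of `M_i` in
row the `i`-th bit of `z` and column the `i`-th bit of `w`. -/
theorem stmt_11 {ℓ q : ℕ} (hq : q = 2 ^ ℓ) (hℓ : 1 ≤ ℓ) {F : Type*} [Field F] [Fintype F]
    (hF : Fintype.card F = q ^ 2) [CharP F 2] (α γ : F) (hγ : γ ^ q = γ)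
    (σ : Fin (q + 1) → F) (hinj : Function.Injective σ)
    (hp : (X ^ (q + 1) + C (α ^ q) * X ^ q + C α * X + C γ : F[X]) = ∏ i, (X - C (σ i))) :
    ∀ z < q, ∀ w < q,
      ∑ i, σ i ^ (w * q + z)
        = ∏ i ∈ Finset.range ℓ,
            (if z / 2 ^ i % 2 = 0 then
              (if w / 2 ^ i % 2 = 0 then (1 : F) else α ^ (2 ^ i))
            else
              (if w / 2 ^ i % 2 = 0 then α ^ (q * 2 ^ i) else γ ^ (2 ^ i))) :=
  stmt_11_general hq hℓ hF α γ σ hinj hp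
end

section
/- Let q be a prime power. The evaluation vectors over the affine F_{q^2}-points of the Hermitian curve x^q + x = y^{q+1} of the monomials x^a y^b, for 0 ≤ a ≤ q−1 and 0 ≤ b ≤ q^2−1, are linearly independent over F_{q^2}. Equivalently, a nonzero F_{q^2}-linear combination of such monomials cannot vanish on all q^3 affine points of the curve. -/
/-!
For every `y`, the value `y ^ (q + 1)` is fixed by `z ↦ z ^ q`, and over each such fixed point
the additive map `x ↦ x ^ q + x` has exactly `q` preimages: the fixed points and each fibre are
root sets of polynomials of degree `q`, while `F` has `q * q` elements. So a relation
`∑ c a b • x ^ a * y ^ b = 0` on the curve gives, for each `y`, a polynomial in `x` of degree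
`< q` with `q` roots; hence `∑ b, c a b * y ^ b = 0` for all `y ∈ F`, a polynomial of degree
`< q ^ 2` with `q ^ 2` roots. Both steps are Vandermonde.
-/

open Polynomial Finset

lemma Polynomial.card_filter_eval_eq_zero_le {R : Type*} [CommRing R] [IsDomain R] [DecidableEq R]
    (s : Finset R) {p : R[X]} (hp : p ≠ 0) : #{x ∈ s | p.eval x = 0} ≤ p.natDegree :=
  card_le_degree_of_subset_roots fun x hx => by
    simpa [mem_roots hp] using (mem_filter.1 hx).2

lemma Finset.card_fiber_eq_of_mapsTo {α β : Type*} [Fintype α] [DecidableEq β] {f : α → β}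
    {s : Finset β} {m : ℕ} (hf : ∀ a, f a ∈ s) (hfib : ∀ b ∈ s, #{a | f a = b} ≤ m)
    (hcard : #s * m ≤ Fintype.card α) : ∀ b ∈ s, #{a | f a = b} = m := by
  have hsum : ∑ b ∈ s, #{a | f a = b} = ∑ _b ∈ s, m := by
    refine le_antisymm (sum_le_sum hfib) ?_
    rw [sum_const, smul_eq_mul, ← card_eq_sum_card_fiberwise (fun a _ => hf a)]
    exact hcard
  exact (sum_eq_sum_iff_of_le hfib).1 hsum

namespace FiniteField

variable {F : Type*} [Field F] [Fintype F] {q : ℕ}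

lemma exists_ringHom_pow_of_dvd_card (hq : q ∣ Fintype.card F) :
    ∃ φ : F →+* F, ∀ x, φ x = x ^ q := by
  obtain ⟨n, hp, hcard⟩ := FiniteField.card F (ringChar F)
  obtain ⟨m, -, rfl⟩ := (Nat.dvd_prime_pow hp).1 (hcard ▸ hq)
  have := Fact.mk hp
  exact ⟨iterateFrobenius F (ringChar F) m, fun x => iterateFrobenius_def ..⟩

lemma one_lt_of_card_eq_sq (hF : Fintype.card F = q ^ 2) : 1 < q := by
  have h := Fintype.one_lt_card (α := F)
  rw [hF] at h
  exact (one_lt_pow_iff_of_nonneg (Nat.zero_le q) two_ne_zero).1 h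

lemma pow_add_one_pow_eq (hF : Fintype.card F = q ^ 2) (y : F) :
    (y ^ (q + 1)) ^ q = y ^ (q + 1) := by
  rw [← pow_mul, add_one_mul, pow_add, ← sq, ← hF, FiniteField.pow_card, pow_succ']

variable [DecidableEq F]

lemma card_filter_pow_eq_self_le (hq : 1 < q) : #{z : F | z ^ q = z} ≤ q := by
  simpa [X_pow_card_sub_X_natDegree_eq F hq, sub_eq_zero] using
    card_filter_eval_eq_zero_le univ (X_pow_card_sub_X_ne_zero F hq)

lemma card_filter_pow_add_self_eq_le (hq : 1 < q) (z : F) : #{x : F | x ^ q + x = z} ≤ q := by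
  have hdeg : degree (X - C z) < q := by
    rw [degree_X_sub_C]; exact_mod_cast hq
  have hmonic : (X ^ q + (X - C z)).Monic := monic_X_pow_add hdeg
  have := card_filter_eval_eq_zero_le univ hmonic.ne_zero
  rw [natDegree_add_eq_left_of_degree_lt (by rwa [degree_X_pow])] at this
  simpa [← add_sub_assoc, sub_eq_zero] using this

lemma card_filter_pow_add_self_eq (hF : Fintype.card F = q ^ 2) {z : F} (hz : z ^ q = z) :
    #{x : F | x ^ q + x = z} = q := by
  obtain ⟨φ, hφ⟩ := exists_ringHom_pow_of_dvd_card (hF ▸ dvd_pow_self q two_ne_zero)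
  have hq := one_lt_of_card_eq_sq hF
  refine card_fiber_eq_of_mapsTo (f := fun x : F => x ^ q + x) (s := {z | z ^ q = z}) ?_
    (fun z _ => card_filter_pow_add_self_eq_le hq z) ?_ z (by simpa using hz)
  · intro x
    have hx : x ^ (q * q) = x := by rw [← sq, ← hF, FiniteField.pow_card]
    simp only [mem_filter, mem_univ, true_and]
    rw [← hφ, map_add, hφ, hφ, ← pow_mul, hx, add_comm]
  · rw [hF, sq]
    exact Nat.mul_le_mul_right q (card_filter_pow_eq_self_le hq)

end FiniteField

theorem stmt_18_general {q : ℕ} {F : Type*} [Field F] [Fintype F]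
    (hF : Fintype.card F = q ^ 2) :
    LinearIndependent F
      (fun ab : Fin q × Fin (q ^ 2) =>
        (fun p : {p : F × F // p.1 ^ q + p.1 = p.2 ^ (q + 1)} =>
          p.1.1 ^ (ab.1 : ℕ) * p.1.2 ^ (ab.2 : ℕ))) := by
  classical
  rw [Fintype.linearIndependent_iff]
  rintro g hg ⟨a, b⟩
  have hcurve : ∀ x y : F, x ^ q + x = y ^ (q + 1) →
      ∑ a : Fin q, (∑ b : Fin (q ^ 2), g (a, b) * y ^ (b : ℕ)) * x ^ (a : ℕ) = 0 := by
    intro x y hxy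
    have hrel := congrFun hg ⟨(x, y), hxy⟩
    simp only [Finset.sum_apply, Fintype.sum_prod_type, Pi.smul_apply, smul_eq_mul,
      Pi.zero_apply] at hrel
    rw [← hrel]
    simp only [Finset.sum_mul]
    exact Finset.sum_congr rfl fun _ _ => Finset.sum_congr rfl fun _ _ => by ring
  have hy : ∀ y : F, ∀ a, ∑ b : Fin (q ^ 2), g (a, b) * y ^ (b : ℕ) = 0 := by
    intro y
    set e := Fintype.equivFinOfCardEq ((Fintype.card_coe _).trans
      (FiniteField.card_filter_pow_add_self_eq hF (FiniteField.pow_add_one_pow_eq hF y)))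
    exact congrFun (Matrix.eq_zero_of_forall_index_sum_mul_pow_eq_zero
      (Subtype.val_injective.comp e.symm.injective)
      fun j => hcurve _ y (mem_filter.1 (e.symm j).2).2)
  exact congrFun (Matrix.eq_zero_of_forall_index_sum_mul_pow_eq_zero
    (Fintype.equivFinOfCardEq hF).symm.injective fun y => hy _ a) b

/-- The evaluation vectors on the affine `F_{q^2}`-points of the Hermitian curve
`x^q + x = y^(q+1)` of the monomials `x^a y^b`, `0 ≤ a ≤ q-1`, `0 ≤ b ≤ q^2-1`, are linearly
independent over `F_{q^2}`. -/
theorem stmt_18 {q : ℕ} (hq : IsPrimePow q) {F : Type*} [Field F] [Fintype F]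
    (hF : Fintype.card F = q ^ 2) :
    LinearIndependent F
      (fun ab : Fin q × Fin (q ^ 2) =>
        (fun p : {p : F × F // p.1 ^ q + p.1 = p.2 ^ (q + 1)} =>
          p.1.1 ^ (ab.1 : ℕ) * p.1.2 ^ (ab.2 : ℕ))) :=
  stmt_18_general hF
end

section
/- Let q = 2^ℓ with ℓ ≥ 1, and let a, b be nonnegative integers with a ≤ q−1 and b ≤ q^2−1. Write b = wq + b' with b' < q. Suppose: (i) b' < 2^{ℓ−1} and w ≡ 0 mod 2^i for some 1 ≤ i ≤ ℓ; (ii) a < 2^{ℓ−1}; (iii) there exists 0 ≤ s ≤ i−1 with bit s of a and bit s of b' both equal to 0. Then for every α, β ∈ F_{q^2} such that p_{α,β}(t) = t^{q+1} + α^q t^q + α t + (β + β^q) has q+1 distinct roots in F_{q^2}, the remainder of (αt+β)^a t^b modulo p_{α,β}(t) has degree strictly less than q. -/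
open Polynomial

/-!
Substituting `t = T + α^q` (a Taylor shift) turns `p_{α,β}` into `T^(q+1) - Δ` with
`Δ = α^(q+1) - (β + β^q)`, because `(T + α^q)^q = T^q + α` in characteristic 2 when `α^(q^2) = α`;
the shifted monomial is `(αT + β - α^(q+1))^a (T - α^q)^b`. Modulo `T^(q+1) - Δ` every `T^k`
reduces to `Δ^(k / (q+1)) T^(k % (q+1))`, so it suffices that the coefficients at `k ≡ q`
(mod `q+1`) vanish. By Lucas' theorem the only surviving terms come from `j ≤₂ a`, `m ≤₂ b`.
Splitting `m = m₁ q + m₀`, the congruence `j + m ≡ q` forces `m₁ = j + m₀ + 1`; but `2^i ∣ m₁`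
since `m₁ ≤₂ w`, while adding `1` to `j + m₀` cannot carry past bit `s`, where both vanish.
-/

def BitsLE (j a : ℕ) : Prop := ∀ t, j.testBit t = true → a.testBit t = true

infix:50 " ≤₂ " => BitsLE

namespace BitsLE

variable {j a : ℕ}

theorem le (h : j ≤₂ a) : j ≤ a := Nat.le_of_testBit h

theorem div_two_pow (h : j ≤₂ a) (n : ℕ) : j / 2 ^ n ≤₂ a / 2 ^ n := by
  intro t ht
  rw [Nat.testBit_div_two_pow] at ht ⊢
  exact h _ ht

theorem mod_two_pow (h : j ≤₂ a) (n : ℕ) : j % 2 ^ n ≤₂ a % 2 ^ n := by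
  intro t ht
  rw [Nat.testBit_mod_two_pow, Bool.and_eq_true] at ht ⊢
  exact ⟨ht.1, h _ ht.2⟩

theorem testBit_eq_false (h : j ≤₂ a) {t : ℕ} (ht : a.testBit t = false) :
    j.testBit t = false :=
  Bool.eq_false_iff.mpr fun hj => by simp [h t hj] at ht

theorem two_pow_dvd (h : j ≤₂ a) {n : ℕ} (ha : 2 ^ n ∣ a) : 2 ^ n ∣ j := by
  have := (h.mod_two_pow n).le
  rw [Nat.mod_eq_zero_of_dvd ha] at this
  exact Nat.dvd_of_mod_eq_zero (Nat.le_zero.mp this)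

end BitsLE

theorem not_two_dvd_choose_iff {n k : ℕ} : ¬ 2 ∣ n.choose k ↔
    ¬ 2 ∣ (n % 2).choose (k % 2) ∧ ¬ 2 ∣ (n / 2).choose (k / 2) := by
  have : Fact (Nat.Prime 2) := ⟨Nat.prime_two⟩
  rw [(Choose.choose_modEq_choose_mod_mul_choose_div_nat (p := 2)).dvd_iff dvd_rfl,
    Nat.prime_two.dvd_mul, not_or]

theorem bitsLE_of_not_two_dvd_choose {n k : ℕ} (h : ¬ 2 ∣ n.choose k) : k ≤₂ n := by
  intro t
  induction t generalizing n k with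
  | zero =>
    intro hk
    rw [Nat.testBit_zero, decide_eq_true_eq] at hk ⊢
    by_contra hn
    rw [Nat.mod_two_not_eq_one] at hn
    exact (not_two_dvd_choose_iff.mp h).1 (by simp [hn, hk])
  | succ t ih =>
    rw [Nat.testBit_succ, Nat.testBit_succ]
    exact ih (not_two_dvd_choose_iff.mp h).2

theorem mod_two_pow_succ_lt_of_testBit_eq_false {x s : ℕ} (hx : x.testBit s = false) :
    x % 2 ^ (s + 1) < 2 ^ s := by
  rw [Nat.testBit_eq_decide_div_mod_eq, decide_eq_false_iff_not] at hx
  rw [Nat.mod_pow_succ, Nat.mod_two_ne_one.mp hx, mul_zero, add_zero]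
  exact Nat.mod_lt _ (by positivity)

theorem not_two_pow_dvd_add_add_one {x y s i : ℕ} (hs : s < i) (hx : x.testBit s = false)
    (hy : y.testBit s = false) : ¬ 2 ^ i ∣ x + y + 1 := by
  intro h
  have hmod : x + y + 1 ≡ x % 2 ^ (s + 1) + y % 2 ^ (s + 1) + 1 [MOD 2 ^ (s + 1)] :=
    ((Nat.mod_modEq x _).symm.add (Nat.mod_modEq y _).symm).add_right 1
  have hdvd := (hmod.dvd_iff dvd_rfl).mp ((pow_dvd_pow 2 hs).trans h)
  have := Nat.le_of_dvd (by omega) hdvd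
  have hx' := mod_two_pow_succ_lt_of_testBit_eq_false hx
  have hy' := mod_two_pow_succ_lt_of_testBit_eq_false hy
  have h2 : 2 ^ (s + 1) = 2 * 2 ^ s := pow_succ' 2 s
  omega

theorem eq_add_one_of_mul_add_mod_succ_eq {q m x : ℕ} (hm : m ≤ q) (hx : x < q)
    (h : (q * m + x) % (q + 1) = q) : m = x + 1 := by
  have h₁ : q * m + x + 1 ≡ 0 [MOD q + 1] := by
    rw [Nat.ModEq, Nat.add_mod, h]; simp
  have h₂ : q * m + x + 1 + m ≡ x + 1 [MOD q + 1] := by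
    rw [show q * m + x + 1 + m = x + 1 + (q + 1) * m by ring]
    exact Nat.add_mul_mod_self_left ..
  have h₃ : m ≡ x + 1 [MOD q + 1] := by
    simpa using (h₁.add_right m).symm.trans h₂
  exact h₃.eq_of_lt_of_lt (by omega) (by omega)

theorem add_mod_two_pow_succ_ne {ℓ a b' w i s j m : ℕ} (hab : a + b' < 2 ^ ℓ) (hw : w < 2 ^ ℓ)
    (hwi : 2 ^ i ∣ w) (hsi : s < i) (has : a.testBit s = false) (hbs : b'.testBit s = false)
    (hj : j ≤₂ a) (hm : m ≤₂ w * 2 ^ ℓ + b') : (j + m) % (2 ^ ℓ + 1) ≠ 2 ^ ℓ := by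
  have hpos : 0 < 2 ^ ℓ := by positivity
  have hdiv : (w * 2 ^ ℓ + b') / 2 ^ ℓ = w := by
    rw [Nat.mul_comm, Nat.mul_add_div hpos, Nat.div_eq_of_lt (by omega), add_zero]
  have hmod : (w * 2 ^ ℓ + b') % 2 ^ ℓ = b' := by
    rw [Nat.mul_add_mod_self_right, Nat.mod_eq_of_lt (by omega)]
  have hm₁ : m / 2 ^ ℓ ≤₂ w := hdiv ▸ hm.div_two_pow ℓ
  have hm₀ : m % 2 ^ ℓ ≤₂ b' := hmod ▸ hm.mod_two_pow ℓ
  have hsplit : j + m = 2 ^ ℓ * (m / 2 ^ ℓ) + (j + m % 2 ^ ℓ) := by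
    have := Nat.div_add_mod m (2 ^ ℓ)
    omega
  intro h
  have hcarry : m / 2 ^ ℓ = j + m % 2 ^ ℓ + 1 := by
    refine eq_add_one_of_mul_add_mod_succ_eq (hm₁.le.trans hw.le) ?_ (hsplit ▸ h)
    have := hj.le
    have := hm₀.le
    omega
  have hdvd : 2 ^ i ∣ j + m % 2 ^ ℓ + 1 := hcarry ▸ hm₁.two_pow_dvd hwi
  exact not_two_pow_dvd_add_add_one hsi (hj.testBit_eq_false has) (hm₀.testBit_eq_false hbs) hdvd

section Polynomial

variable {R : Type*}

theorem coeff_C_mul_X_add_C_pow [CommSemiring R] (u v : R) (n k : ℕ) :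
    ((C u * X + C v) ^ n).coeff k = v ^ (n - k) * n.choose k * u ^ k := by
  have : (C u * X + C v) ^ n = ((X + C v) ^ n).comp (C u * X) := by
    simp
  rw [this, comp_C_mul_X_coeff, coeff_X_add_C_pow]

theorem coeff_C_mul_X_add_C_pow_mul_X_add_C_pow_eq_zero [CommRing R] [CharP R 2]
    (u v c : R) {a b k : ℕ} (h : ∀ j m, j + m = k → j ≤₂ a → m ≤₂ b → False) :
    ((C u * X + C v) ^ a * (X + C c) ^ b).coeff k = 0 := by
  rw [coeff_mul]
  refine Finset.sum_eq_zero fun ⟨j, m⟩ hjm => ?_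
  rw [Finset.HasAntidiagonal.mem_antidiagonal] at hjm
  rw [coeff_C_mul_X_add_C_pow, coeff_X_add_C_pow]
  by_cases hj : 2 ∣ a.choose j
  · simp [(CharP.cast_eq_zero_iff R 2 _).mpr hj]
  by_cases hm : 2 ∣ b.choose m
  · simp [(CharP.cast_eq_zero_iff R 2 _).mpr hm]
  exact (h j m hjm (bitsLE_of_not_two_dvd_choose hj) (bitsLE_of_not_two_dvd_choose hm)).elim

theorem X_pow_sub_C_dvd_C_mul_X_pow_sub [CommRing R] (Δ c : R) (n k : ℕ) :
    X ^ n - C Δ ∣ C c * X ^ k - C (c * Δ ^ (k / n)) * X ^ (k % n) := by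
  have hk : C c * X ^ k - C (c * Δ ^ (k / n)) * X ^ (k % n) =
      C c * X ^ (k % n) * ((X ^ n) ^ (k / n) - C Δ ^ (k / n)) := by
    have hX : (X : R[X]) ^ k = (X ^ n) ^ (k / n) * X ^ (k % n) := by
      rw [← pow_mul, ← pow_add, Nat.div_add_mod]
    rw [hX, C_mul, C_pow]
    ring
  rw [hk]
  exact (sub_dvd_pow_sub_pow _ _ _).mul_left _

theorem taylor_modByMonic [CommRing R] [Nontrivial R] {p : R[X]} (hp : p.Monic) (r : R)
    (f : R[X]) : taylor r f %ₘ taylor r p = taylor r (f %ₘ p) := by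
  have hp' : (taylor r p).Monic := hp.comp_X_add_C r
  have hdvd : taylor r p ∣ taylor r f - taylor r (f %ₘ p) := by
    nth_rewrite 1 [← modByMonic_add_div f p]
    rw [← map_sub, add_sub_cancel_left, taylor_mul]
    exact dvd_mul_right _ _
  rw [modByMonic_eq_of_dvd_sub hp' hdvd, modByMonic_eq_self_iff hp', degree_taylor,
    degree_taylor]
  exact degree_modByMonic_lt f hp

theorem degree_modByMonic_X_pow_sub_C_lt [CommRing R] [Nontrivial R] {n r : ℕ} (hn : 0 < n)
    (Δ : R) {f : R[X]} (hf : ∀ k, r ≤ k % n → f.coeff k = 0) :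
    (f %ₘ (X ^ n - C Δ)).degree < r := by
  have hmonic : (X ^ n - C Δ).Monic := monic_X_pow_sub_C Δ hn.ne'
  set g := ∑ k ∈ f.support, C (f.coeff k * Δ ^ (k / n)) * X ^ (k % n)
  have hdvd : X ^ n - C Δ ∣ f - g := by
    nth_rewrite 1 [f.as_sum_support_C_mul_X_pow]
    rw [← Finset.sum_sub_distrib]
    exact Finset.dvd_sum fun k _ => X_pow_sub_C_dvd_C_mul_X_pow_sub Δ _ n k
  have hg : ∀ m : ℕ, (∀ k ∈ f.support, k % n < m) → g.degree < m := fun m hm =>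
    (degree_sum_le _ _).trans_lt <| (Finset.sup_lt_iff (WithBot.bot_lt_coe m)).mpr fun k hk =>
      (degree_C_mul_X_pow_le _ _).trans_lt (WithBot.coe_lt_coe.mpr (hm k hk))
  rw [modByMonic_eq_of_dvd_sub hmonic hdvd, (modByMonic_eq_self_iff hmonic).mpr]
  · exact hg r fun k hk => not_le.mp fun h => mem_support_iff.mp hk (hf k h)
  · rw [degree_X_pow_sub_C hn]
    exact hg n fun k _ => Nat.mod_lt k hn

theorem taylor_X_pow_add_one_sub_C [CommRing R] {p ℓ q : ℕ} [Fact p.Prime] [CharP R p]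
    (hq : q = p ^ ℓ) {α : R} (hα : (α ^ q) ^ q = α) (γ : R) :
    taylor (α ^ q) (X ^ (q + 1) - C (α ^ (q + 1) - γ)) =
      X ^ (q + 1) + C (α ^ q) * X ^ q + C α * X + C γ := by
  have hfrob : (X + C (α ^ q) : R[X]) ^ q = X ^ q + C α := by
    rw [hq, add_pow_char_pow, ← hq, ← C_pow, hα]
  rw [map_sub, taylor_X_pow, taylor_C, pow_succ, hfrob, pow_succ α, C_sub, C_mul]
  ring

theorem taylor_C_mul_X_add_C_pow_mul_X_sub_C_pow [CommRing R] (u v c : R) (a b : ℕ) :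
    taylor c ((C u * X + C (v - u * c)) ^ a * (X - C c) ^ b) = (C u * X + C v) ^ a * X ^ b := by
  simp only [taylor_mul, taylor_pow, map_add, map_sub, taylor_C, taylor_X, C_mul]
  ring

end Polynomial

theorem stmt_19_general {ℓ q : ℕ} (hq : q = 2 ^ ℓ) (hℓ : 1 ≤ ℓ) {F : Type*} [Field F] [Fintype F]
    (hF : Fintype.card F = q ^ 2) (a b w b' : ℕ) (hb : b ≤ q ^ 2 - 1)
    (hbw : b = w * q + b')
    (hb' : b' < 2 ^ (ℓ - 1)) (ha' : a < 2 ^ (ℓ - 1))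
    (hi : ∃ i, 1 ≤ i ∧ i ≤ ℓ ∧ w % 2 ^ i = 0 ∧
      ∃ s, s < i ∧ Nat.testBit a s = false ∧ Nat.testBit b' s = false)
    (α β : F) :
    (((C α * X + C β) ^ a * X ^ b : F[X]) %ₘ
        (X ^ (q + 1) + C (α ^ q) * X ^ q + C α * X + C (β + β ^ q))).degree
      < (q : ℕ) := by
  obtain ⟨i, -, -, hwi, s, hsi, has, hbs⟩ := hi
  subst hq
  have : Fact (Nat.Prime 2) := ⟨Nat.prime_two⟩
  have : CharP F 2 := charP_of_card_eq_prime_pow (f := 2 * ℓ) (by rw [hF, ← pow_mul, mul_comm])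
  have hα : (α ^ 2 ^ ℓ) ^ 2 ^ ℓ = α := by rw [← pow_mul, ← sq, ← hF, FiniteField.pow_card]
  have hw : w < 2 ^ ℓ := by
    have : 0 < (2 ^ ℓ) ^ 2 := by positivity
    exact Nat.lt_of_mul_lt_mul_right (a := 2 ^ ℓ) (by rw [← sq]; omega)
  have hab : a + b' < 2 ^ ℓ := by
    rw [← Nat.two_pow_pred_add_two_pow_pred hℓ]; omega
  rw [← taylor_X_pow_add_one_sub_C rfl hα, ← taylor_C_mul_X_add_C_pow_mul_X_sub_C_pow α β,
    taylor_modByMonic (monic_X_pow_sub_C _ (by omega)), degree_taylor, CharTwo.sub_eq_add X]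
  refine degree_modByMonic_X_pow_sub_C_lt (by omega) _ fun k hk => ?_
  refine coeff_C_mul_X_add_C_pow_mul_X_add_C_pow_eq_zero _ _ _ fun j m hjm hj hm => ?_
  have := Nat.mod_lt k (show 0 < 2 ^ ℓ + 1 by omega)
  exact add_mod_two_pow_succ_ne hab hw (Nat.dvd_of_mod_eq_zero hwi) hsi has hbs hj (hbw ▸ hm)
    (by rw [hjm]; omega)

/-- Claim 1: if `a ≤ q-1`, `b = wq + b' ≤ q^2-1` with `b' < q` satisfy
(i) `b' < 2^(ℓ-1)` and `w ≡ 0 (mod 2^i)` for some `1 ≤ i ≤ ℓ`, (ii) `a < 2^(ℓ-1)`, and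
(iii) some bit `s ≤ i-1` of both `a` and `b'` is zero, then for every `α, β` such that
`p_{α,β}(t) = t^(q+1) + α^q t^q + α t + (β + β^q)` has `q+1` distinct roots in `F_{q^2}`,
the remainder of `(αt+β)^a t^b` modulo `p_{α,β}` has degree strictly less than `q`. -/
theorem stmt_19 {ℓ q : ℕ} (hq : q = 2 ^ ℓ) (hℓ : 1 ≤ ℓ) {F : Type*} [Field F] [Fintype F]
    (hF : Fintype.card F = q ^ 2) (a b w b' : ℕ) (ha : a ≤ q - 1) (hb : b ≤ q ^ 2 - 1)
    (hbw : b = w * q + b') (hb'q : b' < q)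
    (hb' : b' < 2 ^ (ℓ - 1)) (ha' : a < 2 ^ (ℓ - 1))
    (hi : ∃ i, 1 ≤ i ∧ i ≤ ℓ ∧ w % 2 ^ i = 0 ∧
      ∃ s, s < i ∧ Nat.testBit a s = false ∧ Nat.testBit b' s = false)
    (α β : F)
    (hroots : ∃ s : Finset F, s.card = q + 1 ∧ ∀ x ∈ s,
      Polynomial.eval x
        (X ^ (q + 1) + C (α ^ q) * X ^ q + C α * X + C (β + β ^ q) : F[X]) = 0) :
    (((C α * X + C β) ^ a * X ^ b : F[X]) %ₘ
        (X ^ (q + 1) + C (α ^ q) * X ^ q + C α * X + C (β + β ^ q))).degree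
      < (q : ℕ) :=
  stmt_19_general hq hℓ hF a b w b' hb hbw hb' ha' hi α β
end
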